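/- arXiv:2203.04532 — 2 statements merged into one kernel-verified Lean document; each statement's English description precedes it below -/
import Mathlib

section
/- (MBP of GSAV-EI2.) Suppose β > 0 satisfies f(β) ≤ 0 ≤ f(−β) and κ ≥ max_{|ξ|≤β} |f'(ξ)|. Then for any time step τ > 0: if ‖u_init‖_∞ ≤ β, then the GSAV-EI2 iterates satisfy ‖uⁿ‖_∞ ≤ β for every n ≥ 0. -/
open scoped BigOperators
noncomputable section

/-- Grid functions on the `M × M` periodic mesh, identified with vectors in `ℝ^{M²}`.
The sup norm of this Pi type is the discrete `L^∞` (maximum) norm. -/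
abbrev GridFun (M : ℕ) : Type := Fin M × Fin M → ℝ

/-- Discrete inner product `⟨v,w⟩ = h² Σ_{i,j} v_{ij} w_{ij}`. -/
def gridInner (M : ℕ) (h : ℝ) (v w : GridFun M) : ℝ :=
  h ^ 2 * ∑ p : Fin M × Fin M, v p * w p

/-- Discrete `L²` norm `‖v‖ = ⟨v,v⟩^{1/2}`. -/
def gridNorm (M : ℕ) (h : ℝ) (v : GridFun M) : ℝ :=
  Real.sqrt (gridInner M h v v)

/-- The discrete Laplacian as a linear map (periodic indexing via `Fin M` arithmetic). -/
def dLapL (M : ℕ) [NeZero M] (h : ℝ) : GridFun M →ₗ[ℝ] GridFun M where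
  toFun v := fun p =>
    (v (p.1 + 1, p.2) + v (p.1 - 1, p.2) + v (p.1, p.2 + 1) + v (p.1, p.2 - 1) - 4 * v p) / h ^ 2
  map_add' v w := by funext p; simp only [Pi.add_apply]; ring
  map_smul' c v := by funext p; simp only [Pi.smul_apply, smul_eq_mul, RingHom.id_apply]; ring

/-- The discrete Laplacian `Δ_h` as a continuous linear map on `ℝ^{M²}`. -/
def dLap (M : ℕ) [NeZero M] (h : ℝ) : GridFun M →L[ℝ] GridFun M :=
  LinearMap.toContinuousLinearMap (dLapL M h)

/-- Bulk energy `E_{1h}(v) = h² Σ F(v_{ij})`. -/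
def E1h (M : ℕ) (h : ℝ) (F : ℝ → ℝ) (v : GridFun M) : ℝ :=
  h ^ 2 * ∑ p : Fin M × Fin M, F (v p)

/-- Discrete gradient energy `(ε²/2) ‖∇_h v‖²`. -/
def gradE (M : ℕ) [NeZero M] (h ε : ℝ) (v : GridFun M) : ℝ :=
  ε ^ 2 / 2 * (h ^ 2 * ∑ p : Fin M × Fin M,
    (((v (p.1 + 1, p.2) - v p) / h) ^ 2 + ((v (p.1, p.2 + 1) - v p) / h) ^ 2))

/-- Modified energy `𝓔_h(v, r) = (ε²/2)‖∇_h v‖² + r`. -/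
def modE (M : ℕ) [NeZero M] (h ε : ℝ) (v : GridFun M) (r : ℝ) : ℝ :=
  gradE M h ε v + r

/-- Discrete energy `E_h(v) = (ε²/2)‖∇_h v‖² + E_{1h}(v)`. -/
def Eh (M : ℕ) [NeZero M] (h ε : ℝ) (F : ℝ → ℝ) (v : GridFun M) : ℝ :=
  gradE M h ε v + E1h M h F v

/-- `g(v, r) = σ(r) / σ(E_{1h}(v))`. -/
def gFun (M : ℕ) (h : ℝ) (F σ : ℝ → ℝ) (v : GridFun M) (r : ℝ) : ℝ :=
  σ r / σ (E1h M h F v)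

/-- The linear operator `L_κ = κ g₀ I − ε² Δ_h`. -/
def Lkappa (M : ℕ) [NeZero M] (h ε κ g0 : ℝ) : GridFun M →L[ℝ] GridFun M :=
  (κ * g0) • (1 : GridFun M →L[ℝ] GridFun M) - ε ^ 2 • dLap M h

/-- The nonlinear operator `N_κ(v, r) = g(v,r) f(v) + κ g₀ v` (with `f` applied entrywise). -/
def Nkappa (M : ℕ) (h κ g0 : ℝ) (f F σ : ℝ → ℝ) (v : GridFun M) (r : ℝ) : GridFun M :=
  fun p => gFun M h F σ v r * f (v p) + κ * g0 * v p

/-- One step of the GSAV-EI1 scheme. -/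
def EI1step (M : ℕ) [NeZero M] (h ε κ τ : ℝ) (f F σ : ℝ → ℝ) (us : GridFun M × ℝ) :
    GridFun M × ℝ :=
  let g0 := gFun M h F σ us.1 us.2
  let Lk := Lkappa M h ε κ g0
  let u1 := (NormedSpace.exp (-(τ • Lk))) us.1
    + (∫ θ in (0:ℝ)..τ, NormedSpace.exp (-((τ - θ) • Lk))) (Nkappa M h κ g0 f F σ us.1 us.2)
  (u1, us.2 - g0 * gridInner M h (fun p => f (us.1 p)) (u1 - us.1))

/-- The GSAV-EI1 iterates `(uⁿ, sⁿ)`. -/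
def EI1 (M : ℕ) [NeZero M] (h ε κ τ : ℝ) (f F σ : ℝ → ℝ) (uinit : GridFun M) :
    ℕ → GridFun M × ℝ
  | 0 => (uinit, E1h M h F uinit)
  | n + 1 => EI1step M h ε κ τ f F σ (EI1 M h ε κ τ f F σ uinit n)

/-- The midpoint values `(ũ^{n+1/2}, s̃^{n+1/2})` of the GSAV-EI2 scheme, as a function of
`(uⁿ, sⁿ)`; the prediction `(ũ^{n+1}, s̃^{n+1})` is a GSAV-EI1 step. -/
def EI2half (M : ℕ) [NeZero M] (h ε κ τ : ℝ) (f F σ : ℝ → ℝ) (us : GridFun M × ℝ) :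
    GridFun M × ℝ :=
  let t := EI1step M h ε κ τ f F σ us
  ((1 / 2 : ℝ) • (us.1 + t.1), (us.2 + t.2) / 2)

/-- One step of the GSAV-EI2 scheme. -/
def EI2step (M : ℕ) [NeZero M] (h ε κ τ : ℝ) (f F σ : ℝ → ℝ) (us : GridFun M × ℝ) :
    GridFun M × ℝ :=
  let t := EI1step M h ε κ τ f F σ us
  let m := EI2half M h ε κ τ f F σ us
  let gh := gFun M h F σ m.1 m.2
  let Lk := Lkappa M h ε κ gh
  let u1 := (NormedSpace.exp (-(τ • Lk))) us.1
    + (∫ θ in (0:ℝ)..τ, NormedSpace.exp (-((τ - θ) • Lk))) (Nkappa M h κ gh f F σ m.1 m.2)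
  (u1, us.2 - gh * gridInner M h (fun p => f (m.1 p)) (u1 - us.1)
        + κ / 2 * gh * gridInner M h (u1 - t.1) (u1 - us.1))

/-- The GSAV-EI2 iterates `(uⁿ, sⁿ)`. -/
def EI2 (M : ℕ) [NeZero M] (h ε κ τ : ℝ) (f F σ : ℝ → ℝ) (uinit : GridFun M) :
    ℕ → GridFun M × ℝ
  | 0 => (uinit, E1h M h F uinit)
  | n + 1 => EI2step M h ε κ τ f F σ (EI2 M h ε κ τ f F σ uinit n)

/-- One step of the stabilized generalized-SAV scheme (GSAV-EI1 with `e^{−τL}` replaced by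
`(I + τL)^{−1}`). -/
def SAV1step (M : ℕ) [NeZero M] (h ε κ τ : ℝ) (f F σ : ℝ → ℝ) (us : GridFun M × ℝ) :
    GridFun M × ℝ :=
  let g0 := gFun M h F σ us.1 us.2
  let Lk := Lkappa M h ε κ g0
  let u1 := (Ring.inverse ((1 : GridFun M →L[ℝ] GridFun M) + τ • Lk))
      (us.1 + τ • Nkappa M h κ g0 f F σ us.1 us.2)
  (u1, us.2 - g0 * gridInner M h (fun p => f (us.1 p)) (u1 - us.1))

/-- The stabilized generalized-SAV iterates `(uⁿ, sⁿ)`. -/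
def SAV1 (M : ℕ) [NeZero M] (h ε κ τ : ℝ) (f F σ : ℝ → ℝ) (uinit : GridFun M) :
    ℕ → GridFun M × ℝ
  | 0 => (uinit, E1h M h F uinit)
  | n + 1 => SAV1step M h ε κ τ f F σ (SAV1 M h ε κ τ f F σ uinit n)


/-!
Write `c = κ g` for the stabilisation weight of a step. Splitting
`L_κ = (c + 4ε²/h²) I − (ε²/h²) S`, where `S` sums the four neighbours and `‖S‖_∞ ≤ 4`, gives
`‖e^{−t L_κ}‖_∞ ≤ e^{−c t}`. Hence `e^{−τ L_κ} u + (∫₀^τ e^{−(τ−θ) L_κ} dθ) N` has sup norm at most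
`e^{−c τ} ‖u‖_∞ + (1 − e^{−c τ}) ‖N‖_∞ / c`, a convex combination of `‖u‖_∞` and `‖N‖_∞ / c`.
Since `ξ ↦ f ξ + κ ξ` is nondecreasing on `[−β, β]` and `f(β) ≤ 0 ≤ f(−β)`, it maps `[−β, β]`
into `[−κβ, κβ]`, so `‖N_κ(v, r)‖_∞ ≤ c β` whenever `‖v‖_∞ ≤ β`. Thus the prediction, the
midpoint and the correction all stay in the ball of radius `β`.
-/

open Set intervalIntegral

section BanachAlgebra

variable {A : Type*} [NormedRing A] [NormedAlgebra ℝ A]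

theorem norm_exp_le_exp_norm [NormOneClass A] (x : A) : ‖NormedSpace.exp x‖ ≤ Real.exp ‖x‖ := by
  rw [NormedSpace.exp_eq_tsum ℝ, Real.exp_eq_exp_ℝ]
  refine tsum_of_norm_bounded (NormedSpace.exp_series_hasSum_exp' (𝕂 := ℝ) ‖x‖) fun n => ?_
  rw [norm_smul, Real.norm_eq_abs, abs_inv, Nat.abs_cast, smul_eq_mul]
  gcongr
  exact norm_pow_le x n

theorem norm_exp_neg_smul_sub_le [NormOneClass A] [CompleteSpace A] (K : A) {s a t : ℝ}
    (hK : ‖K‖ ≤ a) (ht : 0 ≤ t) :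
    ‖NormedSpace.exp (-(t • (s • 1 - K)))‖ ≤ Real.exp (-(t * (s - a))) := by
  let : NormedAlgebra ℚ A := NormedAlgebra.restrictScalars ℚ ℝ A
  have hsplit : -(t • (s • 1 - K)) = algebraMap ℝ A (-(t * s)) + t • K := by
    rw [Algebra.algebraMap_eq_smul_one]
    module
  rw [hsplit, NormedSpace.exp_add_of_commute (Algebra.commutes _ _),
    ← NormedSpace.algebraMap_exp_comm, ← Real.exp_eq_exp_ℝ, ← Algebra.smul_def, norm_smul,
    Real.norm_of_nonneg (Real.exp_pos _).le]
  calc Real.exp (-(t * s)) * ‖NormedSpace.exp (t • K)‖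
      ≤ Real.exp (-(t * s)) * Real.exp (t * a) := by
        gcongr
        refine (norm_exp_le_exp_norm _).trans (Real.exp_le_exp.2 ?_)
        rw [norm_smul, Real.norm_of_nonneg ht]
        gcongr
    _ = Real.exp (-(t * (s - a))) := by rw [← Real.exp_add]; ring_nf

theorem norm_integral_exp_neg_smul_le [CompleteSpace A] (L : A) {c τ : ℝ} (hc : 0 < c)
    (hτ : 0 ≤ τ)
    (hexp : ∀ t, 0 ≤ t → ‖NormedSpace.exp (-(t • L))‖ ≤ Real.exp (-(t * c))) :
    ‖∫ θ in (0 : ℝ)..τ, NormedSpace.exp (-((τ - θ) • L))‖ ≤ (1 - Real.exp (-(τ * c))) / c := by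
  have hvalue : ∫ θ in (0 : ℝ)..τ, Real.exp (-((τ - θ) * c)) = (1 - Real.exp (-(τ * c))) / c := by
    have := integral_comp_mul_add (a := 0) (b := τ) Real.exp hc.ne' (-(τ * c))
    rw [integral_exp, mul_zero, zero_add, show c * τ + -(τ * c) = 0 by ring, Real.exp_zero,
      smul_eq_mul] at this
    rw [← inv_mul_eq_div, ← this]
    congr 1 with θ
    ring_nf
  calc _ ≤ ∫ θ in (0 : ℝ)..τ, Real.exp (-((τ - θ) * c)) :=
        norm_integral_le_of_norm_le hτ
          (MeasureTheory.ae_of_all _ fun θ hθ => hexp _ (by linarith [hθ.2]))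
          (Continuous.intervalIntegrable (by fun_prop) _ _)
    _ = _ := hvalue

end BanachAlgebra

theorem norm_exp_neg_smul_apply_add_integral_le {E : Type*} [NormedAddCommGroup E]
    [NormedSpace ℝ E] [CompleteSpace E] (L : E →L[ℝ] E) {c τ β : ℝ} (hc : 0 < c) (hτ : 0 ≤ τ)
    (hexp : ∀ t, 0 ≤ t → ‖NormedSpace.exp (-(t • L))‖ ≤ Real.exp (-(t * c)))
    {u N : E} (hu : ‖u‖ ≤ β) (hN : ‖N‖ ≤ c * β) :
    ‖NormedSpace.exp (-(τ • L)) u + (∫ θ in (0 : ℝ)..τ, NormedSpace.exp (-((τ - θ) • L))) N‖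
      ≤ β := by
  have hI := norm_integral_exp_neg_smul_le L hc hτ hexp
  have hI₀ : 0 ≤ (1 - Real.exp (-(τ * c))) / c := (norm_nonneg _).trans hI
  calc _ ≤ ‖NormedSpace.exp (-(τ • L))‖ * ‖u‖
        + ‖∫ θ in (0 : ℝ)..τ, NormedSpace.exp (-((τ - θ) • L))‖ * ‖N‖ :=
        norm_add_le_of_le (ContinuousLinearMap.le_opNorm _ u) (ContinuousLinearMap.le_opNorm _ N)
    _ ≤ Real.exp (-(τ * c)) * β + (1 - Real.exp (-(τ * c))) / c * (c * β) := by
        gcongr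
        exact hexp τ hτ
    _ = β := by field_simp; ring

def neighborSum (M : ℕ) [NeZero M] : GridFun M →L[ℝ] GridFun M :=
  LinearMap.toContinuousLinearMap
    { toFun := fun v p => v (p.1 + 1, p.2) + v (p.1 - 1, p.2) + v (p.1, p.2 + 1) + v (p.1, p.2 - 1)
      map_add' := fun v w => by funext p; simp only [Pi.add_apply]; ring
      map_smul' := fun c v => by
        funext p; simp only [Pi.smul_apply, smul_eq_mul, RingHom.id_apply]; ring }

theorem norm_neighborSum_le (M : ℕ) [NeZero M] : ‖neighborSum M‖ ≤ 4 := by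
  refine ContinuousLinearMap.opNorm_le_bound _ (by norm_num) fun v =>
    (pi_norm_le_iff_of_nonneg (by positivity)).2 fun p => ?_
  have hv : ∀ q, ‖v q‖ ≤ ‖v‖ := norm_le_pi_norm v
  calc ‖neighborSum M v p‖ ≤ ‖v (p.1 + 1, p.2)‖ + ‖v (p.1 - 1, p.2)‖ + ‖v (p.1, p.2 + 1)‖
        + ‖v (p.1, p.2 - 1)‖ := norm_add₄_le
    _ ≤ ‖v‖ + ‖v‖ + ‖v‖ + ‖v‖ := by gcongr <;> exact hv _
    _ = 4 * ‖v‖ := by ring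

theorem Lkappa_eq (M : ℕ) [NeZero M] (h ε κ g0 : ℝ) :
    Lkappa M h ε κ g0 = (κ * g0 + 4 * ε ^ 2 / h ^ 2) • 1 - (ε ^ 2 / h ^ 2) • neighborSum M := by
  ext v p
  simp only [Lkappa, dLap, dLapL, neighborSum, sub_apply, smul_apply, one_apply_eq_self,
    LinearMap.coe_toContinuousLinearMap', LinearMap.coe_mk, AddHom.coe_mk, Pi.sub_apply,
    Pi.smul_apply, smul_eq_mul]
  ring

theorem norm_exp_neg_smul_Lkappa_le (M : ℕ) [NeZero M] (h ε κ g0 : ℝ) {t : ℝ} (ht : 0 ≤ t) :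
    ‖NormedSpace.exp (-(t • Lkappa M h ε κ g0))‖ ≤ Real.exp (-(t * (κ * g0))) := by
  have hS : ‖(ε ^ 2 / h ^ 2) • neighborSum M‖ ≤ 4 * ε ^ 2 / h ^ 2 := by
    rw [norm_smul, Real.norm_of_nonneg (by positivity)]
    calc ε ^ 2 / h ^ 2 * ‖neighborSum M‖ ≤ ε ^ 2 / h ^ 2 * 4 := by
          gcongr
          exact norm_neighborSum_le M
      _ = 4 * ε ^ 2 / h ^ 2 := by ring
  rw [Lkappa_eq]
  convert norm_exp_neg_smul_sub_le _ hS ht using 4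
  ring

theorem abs_add_mul_le_of_abs_deriv_le {f : ℝ → ℝ} (hf : Differentiable ℝ f) {κ β x : ℝ}
    (hfβ : f β ≤ 0) (hfβ' : 0 ≤ f (-β)) (hκf : ∀ ξ ∈ Icc (-β) β, |deriv f ξ| ≤ κ)
    (hx : |x| ≤ β) : |f x + κ * x| ≤ κ * β := by
  have hd : Differentiable ℝ fun ξ => f ξ + κ * ξ := by fun_prop
  have hmono : MonotoneOn (fun ξ => f ξ + κ * ξ) (Icc (-β) β) := by
    refine monotoneOn_of_deriv_nonneg (convex_Icc _ _) hd.continuous.continuousOn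
      hd.differentiableOn fun ξ hξ => ?_
    rw [interior_Icc] at hξ
    have hderiv : HasDerivAt (fun ξ => f ξ + κ * ξ) (deriv f ξ + κ) ξ :=
      (hf ξ).hasDerivAt.add (by simpa using (hasDerivAt_id ξ).const_mul κ)
    rw [hderiv.deriv]
    linarith [(abs_le.1 (hκf ξ (Ioo_subset_Icc_self hξ))).1]
  obtain ⟨hxl, hxr⟩ := abs_le.1 hx
  have hlo := hmono (left_mem_Icc.2 (by linarith)) ⟨hxl, hxr⟩ hxl
  have hhi := hmono ⟨hxl, hxr⟩ (right_mem_Icc.2 (by linarith)) hxr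
  simp only at hlo hhi
  exact abs_le.2 ⟨by linarith, by linarith⟩

section Scheme

variable {M : ℕ} {h ε κ τ β : ℝ} {f F σ : ℝ → ℝ}

theorem gFun_pos (hσpos : ∀ x, 0 < σ x) (v : GridFun M) (r : ℝ) : 0 < gFun M h F σ v r :=
  div_pos (hσpos _) (hσpos _)

theorem norm_Nkappa_le (hσpos : ∀ x, 0 < σ x) (hfκ : ∀ x, |x| ≤ β → |f x + κ * x| ≤ κ * β)
    {v : GridFun M} (hv : ‖v‖ ≤ β) (r : ℝ) :
    ‖Nkappa M h κ (gFun M h F σ v r) f F σ v r‖ ≤ κ * gFun M h F σ v r * β := by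
  have hg := gFun_pos (h := h) (F := F) hσpos v r
  have hβ : 0 ≤ β := (norm_nonneg v).trans hv
  have hκβ : 0 ≤ κ * β := (abs_nonneg _).trans (hfκ β (abs_of_nonneg hβ).le)
  refine (pi_norm_le_iff_of_nonneg (by rw [mul_right_comm]; exact mul_nonneg hκβ hg.le)).2
    fun p => ?_
  have hvp : |v p| ≤ β := (norm_le_pi_norm v p).trans hv
  calc ‖Nkappa M h κ (gFun M h F σ v r) f F σ v r p‖
      = |gFun M h F σ v r * (f (v p) + κ * v p)| := by rw [Real.norm_eq_abs, Nkappa]; ring_nf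
    _ = gFun M h F σ v r * |f (v p) + κ * v p| := by rw [abs_mul, abs_of_pos hg]
    _ ≤ gFun M h F σ v r * (κ * β) := by gcongr; exact hfκ _ hvp
    _ = κ * gFun M h F σ v r * β := by ring

theorem norm_exp_integrator_le [NeZero M] (hσpos : ∀ x, 0 < σ x) (hκ : 0 < κ) (hτ : 0 ≤ τ)
    (hfκ : ∀ x, |x| ≤ β → |f x + κ * x| ≤ κ * β) {v : GridFun M} (hv : ‖v‖ ≤ β) (r : ℝ)
    {u : GridFun M} (hu : ‖u‖ ≤ β) :
    ‖NormedSpace.exp (-(τ • Lkappa M h ε κ (gFun M h F σ v r))) u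
      + (∫ θ in (0 : ℝ)..τ, NormedSpace.exp (-((τ - θ) • Lkappa M h ε κ (gFun M h F σ v r))))
        (Nkappa M h κ (gFun M h F σ v r) f F σ v r)‖ ≤ β :=
  norm_exp_neg_smul_apply_add_integral_le _ (mul_pos hκ (gFun_pos hσpos v r)) hτ
    (fun _ ht => norm_exp_neg_smul_Lkappa_le M h ε κ _ ht) hu (norm_Nkappa_le hσpos hfκ hv r)

theorem norm_EI1step_fst_le [NeZero M] (hσpos : ∀ x, 0 < σ x) (hκ : 0 < κ) (hτ : 0 ≤ τ)
    (hfκ : ∀ x, |x| ≤ β → |f x + κ * x| ≤ κ * β) {us : GridFun M × ℝ} (hus : ‖us.1‖ ≤ β) :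
    ‖(EI1step M h ε κ τ f F σ us).1‖ ≤ β :=
  norm_exp_integrator_le hσpos hκ hτ hfκ hus us.2 hus

theorem norm_EI2half_fst_le [NeZero M] (hσpos : ∀ x, 0 < σ x) (hκ : 0 < κ) (hτ : 0 ≤ τ)
    (hfκ : ∀ x, |x| ≤ β → |f x + κ * x| ≤ κ * β) {us : GridFun M × ℝ} (hus : ‖us.1‖ ≤ β) :
    ‖(EI2half M h ε κ τ f F σ us).1‖ ≤ β := by
  have hpred := norm_EI1step_fst_le (h := h) (ε := ε) (F := F) hσpos hκ hτ hfκ hus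
  calc ‖(1 / 2 : ℝ) • (us.1 + (EI1step M h ε κ τ f F σ us).1)‖
      ≤ 1 / 2 * (‖us.1‖ + ‖(EI1step M h ε κ τ f F σ us).1‖) := by
        rw [norm_smul, Real.norm_of_nonneg (by norm_num)]
        gcongr
        exact norm_add_le _ _
    _ ≤ β := by linarith

theorem norm_EI2step_fst_le [NeZero M] (hσpos : ∀ x, 0 < σ x) (hκ : 0 < κ) (hτ : 0 ≤ τ)
    (hfκ : ∀ x, |x| ≤ β → |f x + κ * x| ≤ κ * β) {us : GridFun M × ℝ} (hus : ‖us.1‖ ≤ β) :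
    ‖(EI2step M h ε κ τ f F σ us).1‖ ≤ β :=
  norm_exp_integrator_le hσpos hκ hτ hfκ (norm_EI2half_fst_le hσpos hκ hτ hfκ hus) _ hus

end Scheme

theorem stmt_13_general (M : ℕ) [NeZero M] (h ε : ℝ) (f F σ : ℝ → ℝ) (hσpos : ∀ x, 0 < σ x)
    (κ : ℝ) (hκ : 0 < κ) (hf : ContDiff ℝ 1 f)
    (β : ℝ) (hfβ : f β ≤ 0) (hfβ' : 0 ≤ f (-β))
    (hκf : ∀ ξ ∈ Set.Icc (-β) β, |deriv f ξ| ≤ κ)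
    (τ : ℝ) (hτ : 0 < τ) (uinit : GridFun M) (hinit : ‖uinit‖ ≤ β) :
    ∀ n : ℕ, ‖(EI2 M h ε κ τ f F σ uinit n).1‖ ≤ β := by
  have hfκ : ∀ x, |x| ≤ β → |f x + κ * x| ≤ κ * β := fun _ =>
    abs_add_mul_le_of_abs_deriv_le (hf.differentiable one_ne_zero) hfβ hfβ' hκf
  intro n
  induction n with
  | zero => exact hinit
  | succ n ih => exact norm_EI2step_fst_le hσpos hκ hτ.le hfκ ih

/-- MBP of GSAV-EI2: if `f(β) ≤ 0 ≤ f(−β)` and `κ ≥ max_{|ξ|≤β} |f'(ξ)|`, then for any `τ > 0`,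
`‖u_init‖_∞ ≤ β` implies `‖uⁿ‖_∞ ≤ β` for every `n ≥ 0` (here `‖·‖` is the sup norm). -/
theorem stmt_13 (M : ℕ) [NeZero M] (L h ε : ℝ) (hL : 0 < L) (hh : h = L / M) (hε : 0 < ε)
    (f F σ : ℝ → ℝ) (hF : ∀ x, HasDerivAt F (-f x) x)
    (hσ : ContDiff ℝ 1 σ) (hσpos : ∀ x, 0 < σ x) (hσmono : ∀ x, 0 ≤ deriv σ x)
    (κ : ℝ) (hκ : 0 < κ) (hf : ContDiff ℝ 1 f)
    (β : ℝ) (hβ : 0 < β) (hfβ : f β ≤ 0) (hfβ' : 0 ≤ f (-β))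
    (hκf : ∀ ξ ∈ Set.Icc (-β) β, |deriv f ξ| ≤ κ)
    (τ : ℝ) (hτ : 0 < τ) (uinit : GridFun M) (hinit : ‖uinit‖ ≤ β) :
    ∀ n : ℕ, ‖(EI2 M h ε κ τ f F σ uinit n).1‖ ≤ β :=
  stmt_13_general M h ε f F σ hσpos κ hκ hf β hfβ hfβ' hκf τ hτ uinit hinit
end
end

section
/- (MBP of the stabilized generalized-SAV scheme.) Suppose β > 0 satisfies f(β) ≤ 0 ≤ f(−β) and κ ≥ max_{|ξ|≤β} |f'(ξ)|. Then for any time step τ > 0: if ‖u_init‖_∞ ≤ β, then the iterates of the stabilized generalized-SAV scheme satisfy ‖uⁿ‖_∞ ≤ β for every n ≥ 0. -/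
open scoped BigOperators
noncomputable section

/-! If `|f'| ≤ κ` on `[-β, β]`, then `ξ ↦ f ξ + κ ξ` is nondecreasing there, so the sign
conditions `f β ≤ 0 ≤ f (-β)` give `|f ξ + κ ξ| ≤ κ β`. The explicit part of the step is thus
bounded by `(1 + τ κ g) β` in the maximum norm, while `(1 + τ κ g) I - τ ε² Δ_h` satisfies a
discrete maximum principle: at an entry where `|v|` is maximal, `v` and `Δ_h v` have opposite
signs. Dividing by `1 + τ κ g` closes the induction. -/

open Set

lemma monotoneOn_add_const_mul_of_neg_le_deriv {f : ℝ → ℝ} {κ a b : ℝ}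
    (hf : Differentiable ℝ f) (hκf : ∀ ξ ∈ Icc a b, -κ ≤ deriv f ξ) :
    MonotoneOn (fun x => f x + κ * x) (Icc a b) := by
  have hg : Differentiable ℝ (fun x => f x + κ * x) := hf.add (differentiable_id.const_mul κ)
  refine monotoneOn_of_deriv_nonneg (convex_Icc a b) hg.continuous.continuousOn
    hg.differentiableOn fun x hx => ?_
  have hderiv : deriv (fun x => f x + κ * x) x = deriv f x + κ :=
    ((hf x).hasDerivAt.add ((hasDerivAt_id x).const_mul κ)).deriv.trans (by rw [mul_one])
  rw [hderiv]
  linarith [hκf x (interior_subset hx)]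

lemma abs_add_const_mul_le {f : ℝ → ℝ} {κ β : ℝ} (hf : Differentiable ℝ f)
    (hfβ : f β ≤ 0) (hfβ' : 0 ≤ f (-β)) (hκf : ∀ ξ ∈ Icc (-β) β, |deriv f ξ| ≤ κ)
    {ξ : ℝ} (hξ : ξ ∈ Icc (-β) β) : |f ξ + κ * ξ| ≤ κ * β := by
  have hmono := monotoneOn_add_const_mul_of_neg_le_deriv hf fun x hx => (abs_le.mp (hκf x hx)).1
  have hupper := hmono hξ (right_mem_Icc.mpr (hξ.1.trans hξ.2)) hξ.2
  have hlower := hmono (left_mem_Icc.mpr (hξ.1.trans hξ.2)) hξ hξ.1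
  simp only at hupper hlower
  exact abs_le.mpr ⟨by linarith, by linarith⟩

section MaximumPrinciple

variable {M : ℕ} [NeZero M] {h : ℝ}

lemma mul_dLap_apply_nonpos_of_abs_le {v : GridFun M} {p : Fin M × Fin M}
    (hp : ∀ q, |v q| ≤ |v p|) : v p * dLap M h v p ≤ 0 := by
  have hnbr : ∀ q, v p * v q ≤ v p * v p := fun q =>
    calc v p * v q ≤ |v p| * |v q| := by rw [← abs_mul]; exact le_abs_self _
      _ ≤ |v p| * |v p| := mul_le_mul_of_nonneg_left (hp q) (abs_nonneg _)
      _ = v p * v p := abs_mul_abs_self _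
  have hsum : v p * (v (p.1 + 1, p.2) + v (p.1 - 1, p.2) + v (p.1, p.2 + 1) + v (p.1, p.2 - 1)
      - 4 * v p) ≤ 0 := by
    linarith [hnbr (p.1 + 1, p.2), hnbr (p.1 - 1, p.2), hnbr (p.1, p.2 + 1), hnbr (p.1, p.2 - 1)]
  change v p * ((_ - 4 * v p) / h ^ 2) ≤ 0
  rw [mul_div_assoc']
  exact div_nonpos_of_nonpos_of_nonneg hsum (sq_nonneg h)

lemma mul_norm_le_norm_smul_sub_smul_dLap {a d : ℝ} (ha : 0 ≤ a) (hd : 0 ≤ d)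
    (v : GridFun M) : a * ‖v‖ ≤ ‖a • v - d • dLap M h v‖ := by
  obtain ⟨p, hp⟩ := Finite.exists_max fun q => |v q|
  have hnorm : ‖v‖ ≤ |v p| := (pi_norm_le_iff_of_nonneg (abs_nonneg _)).mpr hp
  set w := a • v - d • dLap M h v
  have hwp : a * (v p * v p) ≤ w p * v p := by
    have := mul_nonneg hd (neg_nonneg.mpr (mul_dLap_apply_nonpos_of_abs_le (h := h) hp))
    simp only [w, Pi.sub_apply, Pi.smul_apply, smul_eq_mul]
    nlinarith
  have hpoint : a * |v p| ≤ |w p| := by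
    rcases (abs_nonneg (v p)).eq_or_lt with hzero | hpos
    · rw [← hzero, mul_zero]; exact abs_nonneg _
    · refine le_of_mul_le_mul_right ?_ hpos
      calc a * |v p| * |v p| = a * (v p * v p) := by rw [mul_assoc, abs_mul_abs_self]
        _ ≤ w p * v p := hwp
        _ ≤ |w p| * |v p| := by rw [← abs_mul]; exact le_abs_self _
  calc a * ‖v‖ ≤ a * |v p| := mul_le_mul_of_nonneg_left hnorm ha
    _ ≤ |w p| := hpoint
    _ ≤ ‖w‖ := norm_le_pi_norm w p

end MaximumPrinciple

lemma one_add_smul_Lkappa_apply (M : ℕ) [NeZero M] (h ε κ g τ : ℝ) (v : GridFun M) :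
    ((1 : GridFun M →L[ℝ] GridFun M) + τ • Lkappa M h ε κ g) v
      = (1 + τ * (κ * g)) • v - (τ * ε ^ 2) • dLap M h v := by
  ext p
  simp only [Lkappa, add_apply, smul_apply, sub_apply, one_apply_eq_self, Pi.add_apply,
    Pi.sub_apply, Pi.smul_apply, smul_eq_mul]
  ring

lemma norm_add_smul_Nkappa_le (M : ℕ) (h κ τ β : ℝ) (f F σ : ℝ → ℝ) (hκ : 0 ≤ κ) (hτ : 0 ≤ τ)
    (hfκ : ∀ ξ ∈ Icc (-β) β, |f ξ + κ * ξ| ≤ κ * β) (v : GridFun M) (r : ℝ)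
    (hg : 0 ≤ gFun M h F σ v r) (hv : ‖v‖ ≤ β) :
    ‖v + τ • Nkappa M h κ (gFun M h F σ v r) f F σ v r‖
      ≤ (1 + τ * (κ * gFun M h F σ v r)) * β := by
  set g := gFun M h F σ v r
  have hτg : 0 ≤ τ * g := mul_nonneg hτ hg
  have hβ : 0 ≤ β := (norm_nonneg v).trans hv
  refine (pi_norm_le_iff_of_nonneg (by positivity)).mpr fun p => ?_
  have hvp : |v p| ≤ β := (norm_le_pi_norm v p).trans hv
  have hrepr : (v + τ • Nkappa M h κ g f F σ v r) p = v p + τ * g * (f (v p) + κ * v p) := by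
    simp only [Nkappa, g, Pi.add_apply, Pi.smul_apply, smul_eq_mul]
    ring
  rw [Real.norm_eq_abs, hrepr]
  calc |v p + τ * g * (f (v p) + κ * v p)| ≤ |v p| + τ * g * |f (v p) + κ * v p| := by
        exact (abs_add_le _ _).trans_eq (by rw [abs_mul, abs_of_nonneg hτg])
    _ ≤ β + τ * g * (κ * β) := by
        gcongr
        exact hfκ _ (abs_le.mp hvp)
    _ = (1 + τ * (κ * g)) * β := by ring

lemma norm_SAV1step_le (M : ℕ) [NeZero M] (h ε κ τ β : ℝ) (f F σ : ℝ → ℝ) (hκ : 0 ≤ κ)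
    (hτ : 0 ≤ τ) (hfκ : ∀ ξ ∈ Icc (-β) β, |f ξ + κ * ξ| ≤ κ * β) (us : GridFun M × ℝ)
    (hg : 0 ≤ gFun M h F σ us.1 us.2) (hus : ‖us.1‖ ≤ β) :
    ‖(SAV1step M h ε κ τ f F σ us).1‖ ≤ β := by
  set g := gFun M h F σ us.1 us.2
  set A := (1 : GridFun M →L[ℝ] GridFun M) + τ • Lkappa M h ε κ g
  have hβ : 0 ≤ β := (norm_nonneg _).trans hus
  have hrhs := norm_add_smul_Nkappa_le M h κ τ β f F σ hκ hτ hfκ us.1 us.2 hg hus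
  change ‖Ring.inverse A _‖ ≤ β
  by_cases hA : IsUnit A
  · have hsolve : ∀ w, A (Ring.inverse A w) = w := fun w =>
      congrArg (fun B : GridFun M →L[ℝ] GridFun M => B w) (Ring.mul_inverse_cancel A hA)
    have hpos : 0 < 1 + τ * (κ * g) := by positivity
    refine le_of_mul_le_mul_left ?_ hpos
    calc (1 + τ * (κ * g)) * ‖Ring.inverse A _‖
        ≤ ‖A (Ring.inverse A (us.1 + τ • Nkappa M h κ g f F σ us.1 us.2))‖ := by
          rw [one_add_smul_Lkappa_apply]
          exact mul_norm_le_norm_smul_sub_smul_dLap hpos.le (by positivity) _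
      _ ≤ (1 + τ * (κ * g)) * β := by rw [hsolve]; exact hrhs
  · rw [Ring.inverse_non_unit A hA, zero_apply, norm_zero]
    exact hβ

theorem stmt_19_general (M : ℕ) [NeZero M] (h ε : ℝ) (f F σ : ℝ → ℝ) (hσpos : ∀ x, 0 < σ x)
    (κ : ℝ) (hκ : 0 < κ) (hf : ContDiff ℝ 1 f)
    (β : ℝ) (hfβ : f β ≤ 0) (hfβ' : 0 ≤ f (-β))
    (hκf : ∀ ξ ∈ Set.Icc (-β) β, |deriv f ξ| ≤ κ)
    (τ : ℝ) (hτ : 0 < τ) (uinit : GridFun M) (hinit : ‖uinit‖ ≤ β) :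
    ∀ n : ℕ, ‖(SAV1 M h ε κ τ f F σ uinit n).1‖ ≤ β := by
  have hfκ : ∀ ξ ∈ Icc (-β) β, |f ξ + κ * ξ| ≤ κ * β := fun ξ =>
    abs_add_const_mul_le (hf.differentiable one_ne_zero) hfβ hfβ' hκf
  intro n
  induction n with
  | zero => exact hinit
  | succ n ih =>
    exact norm_SAV1step_le M h ε κ τ β f F σ hκ.le hτ.le hfκ _
      (div_nonneg (hσpos _).le (hσpos _).le) ih

/-- MBP of the stabilized generalized-SAV scheme: if `f(β) ≤ 0 ≤ f(−β)` and
`κ ≥ max_{|ξ|≤β} |f'(ξ)|`, then for any `τ > 0`, `‖u_init‖_∞ ≤ β` implies `‖uⁿ‖_∞ ≤ β`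
for every `n ≥ 0` (here `‖·‖` is the sup norm). -/
theorem stmt_19 (M : ℕ) [NeZero M] (L h ε : ℝ) (hL : 0 < L) (hh : h = L / M) (hε : 0 < ε)
    (f F σ : ℝ → ℝ) (hF : ∀ x, HasDerivAt F (-f x) x)
    (hσ : ContDiff ℝ 1 σ) (hσpos : ∀ x, 0 < σ x) (hσmono : ∀ x, 0 ≤ deriv σ x)
    (κ : ℝ) (hκ : 0 < κ) (hf : ContDiff ℝ 1 f)
    (β : ℝ) (hβ : 0 < β) (hfβ : f β ≤ 0) (hfβ' : 0 ≤ f (-β))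
    (hκf : ∀ ξ ∈ Set.Icc (-β) β, |deriv f ξ| ≤ κ)
    (τ : ℝ) (hτ : 0 < τ) (uinit : GridFun M) (hinit : ‖uinit‖ ≤ β) :
    ∀ n : ℕ, ‖(SAV1 M h ε κ τ f F σ uinit n).1‖ ≤ β :=
  stmt_19_general M h ε f F σ hσpos κ hκ hf β hfβ hfβ' hκf τ hτ uinit hinit
end
end
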